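/- arXiv:1302.3167 — 4 statements merged into one kernel-verified Lean document; each statement's English description precedes it below -/
import Mathlib

section
/- Let (M, g, ∇) be a statistical manifold of constant curvature K. Then the Ricci tensors of ∇ and of the dual connection ∇* coincide: Ric(Y,Z) = Ric*(Y,Z) for all vector fields Y, Z. -/
/- Algebraic model of a manifold: `C` = smooth functions, `V` = vector fields,
`act` = directional derivative, `bracket` = Lie bracket, `g` = Riemannian metric. -/
structure SMData (C V : Type*) [CommRing C] [AddCommGroup V] [Module C V] where
  act : V → C → C
  bracket : V → V → V
  g : V → V → C
  g_symm : ∀ X Y, g X Y = g Y X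
  g_addl : ∀ X Y Z, g (X + Y) Z = g X Z + g Y Z
  g_smul : ∀ (f : C) (X Y : V), g (f • X) Y = f * g X Y
  act_add : ∀ (X : V) (f h : C), act X (f + h) = act X f + act X h
  act_mul : ∀ (X : V) (f h : C), act X (f * h) = act X f * h + f * act X h
  act_addl : ∀ (X Y : V) (f : C), act (X + Y) f = act X f + act Y f
  act_smull : ∀ (f : C) (X : V) (h : C), act (f • X) h = f * act X h
  bracket_act : ∀ X Y f, act (bracket X Y) f = act X (act Y f) - act Y (act X f)
  bracket_antisymm : ∀ X Y, bracket X Y = - bracket Y X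

namespace SMData

variable {C V : Type*} [CommRing C] [AddCommGroup V] [Module C V] (D : SMData C V)

/-- Axioms for an affine connection. -/
def IsConn (nab : V → V → V) : Prop :=
  (∀ X Y Z : V, nab (X + Y) Z = nab X Z + nab Y Z) ∧
  (∀ X Y Z : V, nab X (Y + Z) = nab X Y + nab X Z) ∧
  (∀ (f : C) (X Y : V), nab (f • X) Y = f • nab X Y) ∧
  (∀ (f : C) (X Y : V), nab X (f • Y) = f • nab X Y + D.act X f • Y)

def IsTorsionFree (nab : V → V → V) : Prop :=
  ∀ X Y, nab X Y - nab Y X = D.bracket X Y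

/-- `(∇_X g)(Y,Z)`. -/
def nablag (nab : V → V → V) (X Y Z : V) : C :=
  D.act X (D.g Y Z) - D.g (nab X Y) Z - D.g Y (nab X Z)

/-- Total symmetry of the cubic form `Q(X,Y,Z) = (∇_X g)(Y,Z)`. -/
def CubicSymm (nab : V → V → V) : Prop :=
  ∀ X Y Z, D.nablag nab X Y Z = D.nablag nab Y X Z

/-- `(M,g,∇)` is a statistical manifold. -/
def IsStatistical (nab : V → V → V) : Prop :=
  D.IsConn nab ∧ D.IsTorsionFree nab ∧ D.CubicSymm nab

/-- `∇*` is the dual (conjugate) connection of `∇` w.r.t. `g`. -/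
def IsDual (nab nabs : V → V → V) : Prop :=
  ∀ X Y Z, D.act X (D.g Y Z) = D.g (nab X Y) Z + D.g Y (nabs X Z)

/-- Curvature tensor `R(X,Y)Z` of a connection. -/
def curv (nab : V → V → V) (X Y Z : V) : V :=
  nab X (nab Y Z) - nab Y (nab X Z) - nab (D.bracket X Y) Z

/-- `(e, ε)` is a pair of `g`-dual frames spanning `V`. -/
def DualFrame {n : ℕ} (e ε : Fin n → V) : Prop :=
  (∀ i j, D.g (e i) (ε j) = if i = j then 1 else 0) ∧
  (∀ v : V, v = ∑ i, D.g v (ε i) • e i)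

/-- Ricci tensor `Ric(Y,Z) = tr (X ↦ R(X,Y)Z)` computed in a dual frame. -/
def ric (nab : V → V → V) {n : ℕ} (e ε : Fin n → V) (Y Z : V) : C :=
  ∑ i, D.g (D.curv nab (e i) Y Z) (ε i)

end SMData

/-- The `α`-connection `∇^{(α)} = ((1+α)/2)∇ + ((1-α)/2)∇*`. -/
noncomputable def aconn {V : Type*} [AddCommGroup V] [Module ℝ V]
    (α : ℝ) (nab nabs : V → V → V) : V → V → V :=
  fun X Y => ((1 + α) / 2 : ℝ) • nab X Y + ((1 - α) / 2 : ℝ) • nabs X Y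

namespace SMData

variable {C V : Type*} [CommRing C] [AddCommGroup V] [Module C V] (D : SMData C V)

lemma g_sub_left (X Y Z : V) : D.g (X - Y) Z = D.g X Z - D.g Y Z :=
  (AddMonoidHom.mk' (D.g · Z) (D.g_addl · · Z)).map_sub X Y

lemma g_sub_right (X Y Z : V) : D.g X (Y - Z) = D.g X Y - D.g X Z := by
  rw [D.g_symm, D.g_sub_left, D.g_symm Y, D.g_symm Z]

lemma act_sub (X : V) (f h : C) : D.act X (f - h) = D.act X f - D.act X h :=
  (AddMonoidHom.mk' (D.act X) (D.act_add X)).map_sub f h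

theorem g_curv_of_isDual {nab nabs : V → V → V} (hd : D.IsDual nab nabs) (X Y A B : V) :
    D.g A (D.curv nabs X Y B) = -D.g (D.curv nab X Y A) B := by
  have hdual : ∀ P Q R : V, D.g P (nabs Q R) = D.act Q (D.g P R) - D.g (nab Q P) R := fun P Q R ↦
    eq_sub_of_add_eq' (hd Q P R).symm
  simp only [curv, D.g_sub_right, D.g_sub_left, hdual, D.act_sub, D.bracket_act]
  ring

/-- `g(R(X,Y)Z, W) = K(g(Y,Z)g(X,W) - g(X,Z)g(Y,W))` is antisymmetric in `(Z, W)`, so minus its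
transpose, which is the curvature of `∇*` by `g_curv_of_isDual`, is the curvature of `∇` again. -/
theorem g_curv_dual_eq_of_constCurv {nab nabs : V → V → V} (hd : D.IsDual nab nabs) (K : C)
    (hK : ∀ X Y Z : V, D.curv nab X Y Z = K • (D.g Y Z • X - D.g X Z • Y)) (X Y Z W : V) :
    D.g (D.curv nabs X Y Z) W = D.g (D.curv nab X Y Z) W := by
  rw [D.g_symm, D.g_curv_of_isDual hd, hK, hK]
  simp only [D.g_smul, D.g_sub_left]
  ring

end SMData

theorem stmt5_general {C V : Type*} [CommRing C] [AddCommGroup V] [Module C V]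
    (D : SMData C V) [Algebra ℝ C] [Module ℝ V] [IsScalarTower ℝ C V]
    (nab nabs : V → V → V)
    (hd : D.IsDual nab nabs)
    (K : ℝ)
    (hK : ∀ X Y Z : V, D.curv nab X Y Z = K • (D.g Y Z • X - D.g X Z • Y))
    {n : ℕ} (e ε : Fin n → V) :
    ∀ Y Z : V, D.ric nab e ε Y Z = D.ric nabs e ε Y Z := by
  have hK' : ∀ X Y Z : V, D.curv nab X Y Z = algebraMap ℝ C K • (D.g Y Z • X - D.g X Z • Y) :=
    fun X Y Z ↦ by rw [hK, algebraMap_smul]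
  intro Y Z
  exact Finset.sum_congr rfl fun i _ ↦ (D.g_curv_dual_eq_of_constCurv hd _ hK' (e i) Y Z (ε i)).symm

theorem stmt5 {C V : Type*} [CommRing C] [AddCommGroup V] [Module C V]
    (D : SMData C V) [Algebra ℝ C] [Module ℝ V] [IsScalarTower ℝ C V]
    (nab nabs : V → V → V)
    (hs : D.IsStatistical nab) (hsc : D.IsConn nabs) (htfs : D.IsTorsionFree nabs)
    (hd : D.IsDual nab nabs)
    (K : ℝ)
    (hK : ∀ X Y Z : V, D.curv nab X Y Z = K • (D.g Y Z • X - D.g X Z • Y))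
    {n : ℕ} (e ε : Fin n → V) (hf : D.DualFrame e ε) :
    ∀ Y Z : V, D.ric nab e ε Y Z = D.ric nabs e ε Y Z :=
  stmt5_general D nab nabs hd K hK e ε
end

section
/- A 2-dimensional statistical manifold (M, g, ∇, ∇*) is conjugate symmetric (R = R*) if and only if it is conjugate Ricci-symmetric (Ric = Ric*). -/
/-- In dimension 2, the curvature of a torsion-free connection is completely
determined by its Ricci tensor in a dual frame. -/
theorem curv_eq_of_ric {C V : Type*} [CommRing C] [AddCommGroup V] [Module C V]
    (D : SMData C V) (nab : V → V → V)
    (hc : D.IsConn nab) (htf : D.IsTorsionFree nab)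
    (e ε : Fin 2 → V) (hf : D.DualFrame e ε) (X Y Z : V) :
    D.curv nab X Y Z
      = (D.g X (ε 0) * D.g Y (ε 1) - D.g X (ε 1) * D.g Y (ε 0)) •
        (D.ric nab e ε (e 1) Z • e 0 - D.ric nab e ε (e 0) Z • e 1) := by
  obtain ⟨haddl, haddr, hsmull, hsmulr⟩ := hc
  obtain ⟨hgf, hspan⟩ := hf
  -- basic facts about `nab`
  have hzero : ∀ Z : V, nab 0 Z = 0 := by
    intro Z
    have h := haddl 0 0 Z
    rw [add_zero] at h
    exact left_eq_add.mp h
  have hneg : ∀ A Z : V, nab (-A) Z = - nab A Z := by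
    intro A Z
    have h : nab A Z + nab (-A) Z = 0 := by
      rw [← haddl, add_neg_cancel, hzero]
    exact eq_neg_of_add_eq_zero_right h
  have hsub_l : ∀ A B Z : V, nab (A - B) Z = nab A Z - nab B Z := by
    intro A B Z
    rw [sub_eq_add_neg, haddl, hneg, ← sub_eq_add_neg]
  have hbr : ∀ A B : V, D.bracket A B = nab A B - nab B A := fun A B => (htf A B).symm
  -- curvature properties
  have hcurv_self : ∀ (A Z : V), D.curv nab A A Z = 0 := by
    intro A Z
    have hb : D.bracket A A = 0 := by rw [hbr, sub_self]
    simp [SMData.curv, hb, hzero]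
  have hanti : ∀ A B Z : V, D.curv nab A B Z = - D.curv nab B A Z := by
    intro A B Z
    have hb : D.bracket B A = - D.bracket A B := D.bracket_antisymm B A
    simp only [SMData.curv, hb, hneg]
    abel
  have haddl_curv : ∀ A A' B Z : V,
      D.curv nab (A + A') B Z = D.curv nab A B Z + D.curv nab A' B Z := by
    intro A A' B Z
    simp only [SMData.curv, hbr, hsub_l, haddl, haddr]
    abel
  have hsmul_l : ∀ (f : C) (A B Z : V),
      D.curv nab (f • A) B Z = f • D.curv nab A B Z := by
    intro f A B Z
    simp only [SMData.curv, hbr, hsmull, hsmulr, hsub_l, haddl, haddr]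
    module
  have haddr_curv : ∀ A B B' Z : V,
      D.curv nab A (B + B') Z = D.curv nab A B Z + D.curv nab A B' Z := by
    intro A B B' Z
    rw [hanti A (B + B'), haddl_curv, hanti B A, hanti B' A]
    abel
  have hsmulr_curv : ∀ (f : C) (A B Z : V),
      D.curv nab A (f • B) Z = f • D.curv nab A B Z := by
    intro f A B Z
    rw [hanti A (f • B), hsmul_l, hanti B A]
    module
  -- facts about g
  have hg0 : ∀ B : V, D.g 0 B = 0 := by
    intro B
    have h := D.g_addl 0 0 B
    rw [add_zero] at h
    exact (left_eq_add.mp h)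
  have hgneg : ∀ A B : V, D.g (-A) B = - D.g A B := by
    intro A B
    have h : D.g A B + D.g (-A) B = 0 := by
      rw [← D.g_addl, add_neg_cancel, hg0]
    exact eq_neg_of_add_eq_zero_right h
  -- frame expansions
  have hXexp : X = D.g X (ε 0) • e 0 + D.g X (ε 1) • e 1 := by
    have h := hspan X; rwa [Fin.sum_univ_two] at h
  have hYexp : Y = D.g Y (ε 0) • e 0 + D.g Y (ε 1) • e 1 := by
    have h := hspan Y; rwa [Fin.sum_univ_two] at h
  -- step 1: reduce to curv e0 e1
  have step1 : D.curv nab X Y Z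
      = (D.g X (ε 0) * D.g Y (ε 1) - D.g X (ε 1) * D.g Y (ε 0)) •
        D.curv nab (e 0) (e 1) Z := by
    conv_lhs => rw [hXexp, hYexp]
    rw [haddl_curv, hsmul_l, hsmul_l, haddr_curv, haddr_curv,
      hsmulr_curv, hsmulr_curv, hsmulr_curv, hsmulr_curv,
      hcurv_self, hcurv_self, hanti (e 1) (e 0)]
    module
  -- step 2: express curv e0 e1 Z via Ricci
  have hr1 : D.ric nab e ε (e 1) Z = D.g (D.curv nab (e 0) (e 1) Z) (ε 0) := by
    simp only [SMData.ric, Fin.sum_univ_two, hcurv_self (e 1) Z, hg0, add_zero]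
  have hr0 : D.ric nab e ε (e 0) Z = - D.g (D.curv nab (e 0) (e 1) Z) (ε 1) := by
    simp only [SMData.ric, Fin.sum_univ_two, hcurv_self (e 0) Z, hg0, zero_add,
      hanti (e 1) (e 0), hgneg]
  have step2 : D.curv nab (e 0) (e 1) Z
      = D.ric nab e ε (e 1) Z • e 0 - D.ric nab e ε (e 0) Z • e 1 := by
    have h := hspan (D.curv nab (e 0) (e 1) Z)
    rw [Fin.sum_univ_two] at h
    rw [hr1, hr0, neg_smul, sub_neg_eq_add]
    exact h
  rw [step1, step2]

theorem stmt11 {C V : Type*} [CommRing C] [AddCommGroup V] [Module C V]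
    (D : SMData C V) (nab nabs : V → V → V)
    (hs : D.IsStatistical nab) (hsc : D.IsConn nabs) (htfs : D.IsTorsionFree nabs)
    (hd : D.IsDual nab nabs)
    (e ε : Fin 2 → V) (hf : D.DualFrame e ε) :
    (∀ X Y Z : V, D.curv nab X Y Z = D.curv nabs X Y Z)
      ↔ (∀ Y Z : V, D.ric nab e ε Y Z = D.ric nabs e ε Y Z) := by
  constructor
  · intro h Y Z
    simp only [SMData.ric, h]
  · intro h X Y Z
    rw [curv_eq_of_ric D nab hs.1 hs.2.1 e ε hf,
      curv_eq_of_ric D nabs hsc htfs e ε hf, h, h]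
end

section
/- Let (M, g, ∇, ∇*) be a statistical manifold that is α-conformal to a Riemannian manifold (M, h, ∇°), i.e., g = e^φ h and ∇_X Y = ∇°_X Y + ((1−α)/2)(dφ(X)Y + dφ(Y)X) − ((1+α)/2) h(X,Y) grad_h φ for some smooth function φ. Then (M, g, ∇) is a statistical manifold with recurrent metric: there exists a 1-form ω such that (∇g)(Y,Z;X) = ω(X)g(Y,Z) + ω(Y)g(Z,X) + ω(Z)g(X,Y) for all X, Y, Z. -/
/-- `(M, g, ∇)` is `α`-conformal to `(M, h, ∇°)` via `φ`, where `E = e^φ`. -/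
def AlphaConformal {C V : Type*} [CommRing C] [AddCommGroup V] [Module C V]
    [Algebra ℝ C] [Module ℝ V] [IsScalarTower ℝ C V]
    (D : SMData C V) (h : V → V → C) (nab0 : V → V → V)
    (φ E : C) (gradφ : V) (α : ℝ) (nab : V → V → V) : Prop :=
  (∀ X Y, D.g X Y = E * h X Y) ∧
  (∀ X Y, nab X Y = nab0 X Y
      + ((1 - α) / 2 : ℝ) • (D.act X φ • Y + D.act Y φ • X)
      - ((1 + α) / 2 : ℝ) • (h X Y • gradφ))

/-!
Write `∇ = ∇° + K`. Since `∇°` is `h`-metric and `X(e^φ) = dφ(X) e^φ`, one gets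
`(∇_X g)(Y,Z) = e^φ (dφ(X) h(Y,Z) - h(K(X,Y),Z) - h(K(X,Z),Y))`, and lowering the explicit
difference tensor `K` of the `α`-conformal connection gives
`h(K(X,Y),Z) + h(K(X,Z),Y) = (1-α) dφ(X) h(Y,Z) - α (dφ(Y) h(Z,X) + dφ(Z) h(X,Y))`.
Hence `∇g` is recurrent with `ω = α dφ`.
-/

namespace SMData

variable {C V : Type*} [CommRing C] [AddCommGroup V] [Module C V] (D : SMData C V)

theorem nablag_eq_of_conformal {H : LinearMap.BilinForm C V} (hH : H.IsSymm)
    {nab0 nab : V → V → V} {φ E : C} (hg : ∀ X Y, D.g X Y = E * H X Y)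
    (hE : ∀ X, D.act X E = D.act X φ * E)
    (hmet0 : ∀ X Y Z, D.act X (H Y Z) = H (nab0 X Y) Z + H Y (nab0 X Z)) (X Y Z : V) :
    D.nablag nab X Y Z =
      E * (D.act X φ * H Y Z - H (nab X Y - nab0 X Y) Z - H (nab X Z - nab0 X Z) Y) := by
  rw [nablag, hg, hg, hg, D.act_mul, hE, hmet0, hH.eq Y (nab X Z), hH.eq Y (nab0 X Z),
    map_sub, map_sub, LinearMap.sub_apply, LinearMap.sub_apply]
  ring

end SMData

namespace AlphaConformal

variable {C V : Type*} [CommRing C] [AddCommGroup V] [Module C V] {D : SMData C V}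
  [Algebra ℝ C] [Module ℝ V] [IsScalarTower ℝ C V]

theorem bilinForm_sub_apply {H : LinearMap.BilinForm C V}
    {nab0 nab : V → V → V} {φ E : C} {gradφ : V} {α : ℝ}
    (hconf : AlphaConformal D (fun X Y => H X Y) nab0 φ E gradφ α nab)
    (hgrad : ∀ X, H gradφ X = D.act X φ) (X Y Z : V) :
    H (nab X Y - nab0 X Y) Z =
      algebraMap ℝ C ((1 - α) / 2) * (D.act X φ * H Y Z + D.act Y φ * H X Z)
        - algebraMap ℝ C ((1 + α) / 2) * (H X Y * D.act Z φ) := by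
  rw [hconf.2, add_sub_assoc, add_sub_cancel_left]
  simp only [map_sub, map_add, LinearMap.map_smul_of_tower, map_smul, LinearMap.sub_apply,
    LinearMap.add_apply, LinearMap.smul_apply, smul_eq_mul, Algebra.smul_def, hgrad]

theorem nablag_eq {H : LinearMap.BilinForm C V} (hH : H.IsSymm)
    {nab0 nab : V → V → V} {φ E : C} {gradφ : V} {α : ℝ}
    (hconf : AlphaConformal D (fun X Y => H X Y) nab0 φ E gradφ α nab)
    (hmet0 : ∀ X Y Z, D.act X (H Y Z) = H (nab0 X Y) Z + H Y (nab0 X Z))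
    (hgrad : ∀ X, H gradφ X = D.act X φ) (hE : ∀ X, D.act X E = D.act X φ * E) (X Y Z : V) :
    D.nablag nab X Y Z = algebraMap ℝ C α *
      (D.act X φ * D.g Y Z + D.act Y φ * D.g Z X + D.act Z φ * D.g X Y) := by
  have hp : algebraMap ℝ C α + 2 * algebraMap ℝ C ((1 - α) / 2) = 1 := by
    rw [← map_ofNat (algebraMap ℝ C) 2, ← map_mul, ← map_add, ← map_one (algebraMap ℝ C)]
    congr 1
    ring
  have hq : algebraMap ℝ C ((1 + α) / 2) =
      algebraMap ℝ C α + algebraMap ℝ C ((1 - α) / 2) := by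
    rw [← map_add]
    congr 1
    ring
  have hg : ∀ X Y, D.g X Y = E * H X Y := hconf.1
  rw [D.nablag_eq_of_conformal hH hg hE hmet0, hconf.bilinForm_sub_apply hgrad,
    hconf.bilinForm_sub_apply hgrad, hg, hg, hg, hH.eq Z X, hH.eq Z Y, hq]
  linear_combination -(E * D.act X φ * H Y Z) * hp

end AlphaConformal

theorem stmt12_general {C V : Type*} [CommRing C] [AddCommGroup V] [Module C V]
    (D : SMData C V) [Algebra ℝ C] [Module ℝ V] [IsScalarTower ℝ C V]
    (nab : V → V → V)
    (h : V → V → C) (nab0 : V → V → V) (φ E : C) (gradφ : V) (α : ℝ)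
    (hhsymm : ∀ X Y, h X Y = h Y X)
    (hhaddl : ∀ X Y Z, h (X + Y) Z = h X Z + h Y Z)
    (hhsmul : ∀ (f : C) (X Y : V), h (f • X) Y = f * h X Y)
    (hmet0 : ∀ X Y Z : V, D.act X (h Y Z) = h (nab0 X Y) Z + h Y (nab0 X Z))
    (hgrad : ∀ X : V, h gradφ X = D.act X φ)
    (hE : ∀ X : V, D.act X E = D.act X φ * E)
    (hconf : AlphaConformal D h nab0 φ E gradφ α nab) :
    ∃ ω : V → C,
      (∀ X Y : V, ω (X + Y) = ω X + ω Y) ∧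
      (∀ (f : C) (X : V), ω (f • X) = f * ω X) ∧
      ∀ X Y Z : V,
        D.nablag nab X Y Z = ω X * D.g Y Z + ω Y * D.g Z X + ω Z * D.g X Y := by
  let H : LinearMap.BilinForm C V := LinearMap.mk₂ C h hhaddl hhsmul
    (fun X Y Z => by rw [hhsymm, hhaddl, hhsymm Y, hhsymm Z])
    (fun f X Y => by rw [hhsymm, hhsmul, hhsymm Y, smul_eq_mul])
  have hH : H.IsSymm := ⟨hhsymm⟩
  refine ⟨fun X => algebraMap ℝ C α * D.act X φ, fun X Y => ?_, fun f X => ?_,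
    fun X Y Z => ?_⟩
  · simp only [D.act_addl, mul_add]
  · simp only [D.act_smull]
    ring
  · rw [AlphaConformal.nablag_eq (H := H) hH hconf hmet0 hgrad hE]
    ring

theorem stmt12 {C V : Type*} [CommRing C] [AddCommGroup V] [Module C V]
    (D : SMData C V) [Algebra ℝ C] [Module ℝ V] [IsScalarTower ℝ C V]
    (nab : V → V → V) (hs : D.IsStatistical nab)
    (h : V → V → C) (nab0 : V → V → V) (φ E : C) (gradφ : V) (α : ℝ)
    (hhsymm : ∀ X Y, h X Y = h Y X)
    (hhaddl : ∀ X Y Z, h (X + Y) Z = h X Z + h Y Z)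
    (hhsmul : ∀ (f : C) (X Y : V), h (f • X) Y = f * h X Y)
    (hc0 : D.IsConn nab0) (htf0 : D.IsTorsionFree nab0)
    (hmet0 : ∀ X Y Z : V, D.act X (h Y Z) = h (nab0 X Y) Z + h Y (nab0 X Z))
    (hgrad : ∀ X : V, h gradφ X = D.act X φ)
    (hEunit : IsUnit E) (hE : ∀ X : V, D.act X E = D.act X φ * E)
    (hconf : AlphaConformal D h nab0 φ E gradφ α nab) :
    ∃ ω : V → C,
      (∀ X Y : V, ω (X + Y) = ω X + ω Y) ∧
      (∀ (f : C) (X : V), ω (f • X) = f * ω X) ∧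
      ∀ X Y Z : V,
        D.nablag nab X Y Z = ω X * D.g Y Z + ω Y * D.g Z X + ω Z * D.g X Y :=
  stmt12_general D nab h nab0 φ E gradφ α hhsymm hhaddl hhsmul hmet0 hgrad hE hconf
end

section
/- Let (M, g, ∇) be a statistical manifold with recurrent metric whose 1-form ω is closed, and let ∇° be the Levi-Civita connection of g and Q = ∇g. Then (∇°_X Q)(Y,Z,W) − (∇°_Y Q)(X,Z,W) = g(W,Y)(∇°_X ω)(Z) − g(W,X)(∇°_Y ω)(Z) + g(Y,Z)(∇°_X ω)(W) − g(X,Z)(∇°_Y ω)(W) for all vector fields X, Y, Z, W. -/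
/-- `(∇°_X Q)(Y,Z,W)` for the cubic form `Q = ∇g`. -/
def covQ {C V : Type*} [CommRing C] [AddCommGroup V] [Module C V]
    (D : SMData C V) (nab0 nab : V → V → V) (X Y Z W : V) : C :=
  D.act X (D.nablag nab Y Z W) - D.nablag nab (nab0 X Y) Z W
    - D.nablag nab Y (nab0 X Z) W - D.nablag nab Y Z (nab0 X W)

/-- `(∇°_X ω)(Z)` for a 1-form `ω`. -/
def covOm {C V : Type*} [CommRing C] [AddCommGroup V] [Module C V]
    (D : SMData C V) (nab0 : V → V → V) (ω : V → C) (X Z : V) : C :=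
  D.act X (ω Z) - ω (nab0 X Z)

theorem covQ_eq_of_recurrent {C V : Type*} [CommRing C] [AddCommGroup V] [Module C V]
    (D : SMData C V) {nab nab0 : V → V → V} (hmet0 : D.IsDual nab0 nab0) {ω : V → C}
    (hrec : ∀ X Y Z : V,
      D.nablag nab X Y Z = ω X * D.g Y Z + ω Y * D.g Z X + ω Z * D.g X Y)
    (X Y Z W : V) :
    covQ D nab0 nab X Y Z W
      = covOm D nab0 ω X Y * D.g Z W + covOm D nab0 ω X Z * D.g W Y
        + covOm D nab0 ω X W * D.g Y Z := by
  simp only [covQ, covOm, hrec, D.act_add, D.act_mul, hmet0 X]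
  ring

theorem stmt16_general {C V : Type*} [CommRing C] [AddCommGroup V] [Module C V]
    (D : SMData C V) (nab nab0 : V → V → V)
    (hmet0 : ∀ X Y Z : V, D.act X (D.g Y Z) = D.g (nab0 X Y) Z + D.g Y (nab0 X Z))
    (ω : V → C)
    (hrec : ∀ X Y Z : V,
      D.nablag nab X Y Z = ω X * D.g Y Z + ω Y * D.g Z X + ω Z * D.g X Y)
    (hclosed : ∀ X Y : V, covOm D nab0 ω X Y = covOm D nab0 ω Y X)
    (X Y Z W : V) :
    covQ D nab0 nab X Y Z W - covQ D nab0 nab Y X Z W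
      = D.g W Y * covOm D nab0 ω X Z - D.g W X * covOm D nab0 ω Y Z
        + D.g Y Z * covOm D nab0 ω X W - D.g X Z * covOm D nab0 ω Y W := by
  rw [covQ_eq_of_recurrent D hmet0 hrec, covQ_eq_of_recurrent D hmet0 hrec, hclosed Y X]
  ring

theorem stmt16 {C V : Type*} [CommRing C] [AddCommGroup V] [Module C V]
    (D : SMData C V) (nab nab0 : V → V → V)
    (hs : D.IsStatistical nab)
    (hc0 : D.IsConn nab0) (htf0 : D.IsTorsionFree nab0)
    (hmet0 : ∀ X Y Z : V, D.act X (D.g Y Z) = D.g (nab0 X Y) Z + D.g Y (nab0 X Z))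
    (ω : V → C)
    (hω_add : ∀ X Y : V, ω (X + Y) = ω X + ω Y)
    (hω_smul : ∀ (f : C) (X : V), ω (f • X) = f * ω X)
    (hrec : ∀ X Y Z : V,
      D.nablag nab X Y Z = ω X * D.g Y Z + ω Y * D.g Z X + ω Z * D.g X Y)
    (hclosed : ∀ X Y : V, covOm D nab0 ω X Y = covOm D nab0 ω Y X)
    (X Y Z W : V) :
    covQ D nab0 nab X Y Z W - covQ D nab0 nab Y X Z W
      = D.g W Y * covOm D nab0 ω X Z - D.g W X * covOm D nab0 ω Y Z
        + D.g Y Z * covOm D nab0 ω X W - D.g X Z * covOm D nab0 ω Y W :=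
  stmt16_general D nab nab0 hmet0 ω hrec hclosed X Y Z W
end
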